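/- arXiv:2007.12048 — 7 statements merged into one kernel-verified Lean document; each statement's English description precedes it below -/
import Mathlib

section
/- Let S be a shrinking cellular automaton with global transition function Δ_S, and let x be a state such that there is a minimal t ∈ ℕ₊ with Δ_S^t(x^{2t+1}) = ε (the empty word). Then for all words z₁, z₂ over the input alphabet, z₁ x^{2t+1} z₂ ∈ L(S) if and only if z₁ x^{2t+1+i} z₂ ∈ L(S) for every i ∈ ℕ₀. -/
/-!
Run on a uniform block `x^m`, a cell whose neighbourhood lies inside the block follows the
diagonal orbit `aₛ` of `x` under `a ↦ δ(a, a, a)`, and the uniform core loses one cell at each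
end per step. As long as no `aₛ` is `⊗`, the configuration after `s` steps is therefore
`P ++ aₛ^(m - 2s) ++ E` with `P`, `E` independent of `m`, and its leftmost active cell does not
see `m`. Because `x^(2t+1)` vanishes after `t` steps, some `a_(j+1)` with `j < t` is `⊗`; at the
first such step the whole core is deleted and from then on the configuration itself is
independent of `m`. So acceptance is the same for all `m ≥ 2(j+1)`, in particular for all
`m ≥ 2t+1`.
-/

/-- A shrinking cellular automaton over input alphabet `α`. -/
structure SCA (α : Type) where
  Q : Type
  fintypeQ : Fintype Q
  decEq : DecidableEq Q
  δ : Q → Q → Q → Q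
  q : Q
  del : Q
  embed : α → Q
  accept : Q → Bool
  del_ne_q : del ≠ q
  inactive : ∀ a b, δ a q b = q
  embed_ne_q : ∀ x, embed x ≠ q

namespace SCA
variable {α : Type} (S : SCA α)

/-- One application of the local rule to every cell (boundary cells see the
inactive state). -/
def raw (w : List S.Q) : List S.Q :=
  (List.range w.length).map fun i =>
    S.δ (if i = 0 then S.q else w.getD (i - 1) S.q) (w.getD i S.q) (w.getD (i + 1) S.q)

/-- The shrinking global transition: apply the local rule, then delete all
cells in the delete state. -/
def step (w : List S.Q) : List S.Q :=
  haveI := S.decEq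
  (S.raw w).filter (fun c => decide (c ≠ S.del))

/-- Configuration reached from input `w` after `t` shrinking transitions. -/
def conf (w : List α) (t : ℕ) : List S.Q := S.step^[t] (w.map S.embed)

/-- `S` accepts `w` at step `t`: the leftmost active cell is accepting. -/
def AcceptsAt (w : List α) (t : ℕ) : Prop :=
  haveI := S.decEq
  ∃ a, ((S.conf w t).dropWhile (fun c => decide (c = S.q))).head? = some a ∧
    S.accept a = true

/-- The language accepted by `S`. -/
def Lang : Set (List α) := {w | ∃ t, S.AcceptsAt w t}

end SCA

/-- `L ∈ SCA[O(T)]`. -/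
def InSCA {α : Type} (L : Set (List α)) (T : ℕ → ℕ) : Prop :=
  ∃ (S : SCA α) (C : ℕ), S.Lang = L ∧
    ∀ w ∈ L, ∃ t ≤ C * T w.length + C, S.AcceptsAt w t

/-- `L ∈ SCA[o(n)]`. -/
def InSCAo {α : Type} (L : Set (List α)) : Prop :=
  ∃ (S : SCA α) (T : ℕ → ℕ), S.Lang = L ∧
    (∀ w ∈ L, ∃ t ≤ T w.length, S.AcceptsAt w t) ∧
    (∀ ε : ℝ, 0 < ε → ∀ᶠ n in Filter.atTop, (T n : ℝ) ≤ ε * n)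

lemma List.head?_dropWhile_append_replicate_succ_append {β : Type*} (p : β → Bool)
    (P E : List β) (A : β) (n : ℕ) :
    ((P ++ List.replicate (n + 1) A ++ E).dropWhile p).head?
      = ((P ++ [A] ++ E).dropWhile p).head? := by
  simp only [← List.find?_not_eq_head?_dropWhile, List.find?_append, List.find?_replicate,
    List.find?_singleton]
  simp

namespace SCA
variable {α : Type} (S : SCA α)

attribute [local instance] SCA.decEq

/-- `S.front l w r` is the raw update of the cells of `w` when the cell left of `w` is in state
`l` and the cell right of `w` is in state `r`. -/
def front : S.Q → List S.Q → S.Q → List S.Q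
  | _, [], _ => []
  | l, a :: u, r => S.δ l a (u.headD r) :: front a u r

@[simp] lemma front_cons (l a r : S.Q) (u : List S.Q) :
    S.front l (a :: u) r = S.δ l a (u.headD r) :: S.front a u r := rfl

lemma map_range_eq_front (w : List S.Q) (l : S.Q) :
    (List.range w.length).map (fun i =>
      S.δ (if i = 0 then l else w.getD (i - 1) S.q) (w.getD i S.q) (w.getD (i + 1) S.q))
      = S.front l w S.q := by
  induction w generalizing l with
  | nil => rfl
  | cons a w ih =>
    rw [List.length_cons, List.range_succ_eq_map, List.map_cons, List.map_map, front_cons, ← ih a]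
    congr 1
    · cases w <;> simp
    · exact List.map_congr_left fun i _ => by cases i <;> simp

lemma step_eq_filter_front (w : List S.Q) :
    S.step w = (S.front S.q w S.q).filter (· ≠ S.del) := by
  rw [← map_range_eq_front]; rfl

lemma front_append (u v : List S.Q) (l r : S.Q) :
    S.front l (u ++ v) r = S.front l u (v.headD r) ++ S.front (u.getLastD l) v r := by
  induction u generalizing l with
  | nil => rfl
  | cons a u ih =>
    have hhead : (u ++ v).headD r = u.headD (v.headD r) := by cases u <;> simp
    simp only [List.cons_append, front_cons, hhead, ih, List.getLastD_cons]

lemma front_replicate (l A r : S.Q) (k : ℕ) :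
    S.front l (List.replicate (k + 2) A) r
      = [S.δ l A A] ++ List.replicate k (S.δ A A A) ++ [S.δ A A r] := by
  induction k generalizing l with
  | zero => rfl
  | succ k ih =>
    rw [List.replicate_succ, front_cons, ih]
    simp [List.replicate_succ]

/-- One step on `P ++ A^(k+2) ++ E`: only the two border cells of the block see outside it. -/
lemma exists_step_append_replicate_append (P E : List S.Q) (A : S.Q) :
    ∃ P' E' : List S.Q, ∀ k, S.step (P ++ List.replicate (k + 2) A ++ E)
      = P' ++ (List.replicate k (S.δ A A A)).filter (· ≠ S.del) ++ E' := by
  refine ⟨(S.front S.q P A ++ [S.δ (P.getLastD S.q) A A]).filter (· ≠ S.del),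
    ([S.δ A A (E.headD S.q)] ++ S.front A E S.q).filter (· ≠ S.del), fun k => ?_⟩
  have hhead : (List.replicate (k + 2) A ++ E).headD S.q = A := by simp [List.replicate_succ]
  have hlast : (List.replicate (k + 2) A).getLastD (P.getLastD S.q) = A := by
    rw [List.replicate_succ']; exact List.getLastD_concat
  rw [step_eq_filter_front, List.append_assoc, front_append, hhead, front_append, hlast,
    front_replicate]
  simp only [List.filter_append, List.append_assoc]

/-- The state after `s` steps of a cell deep inside a uniform block of `X`s. -/
def interiorState (X : S.Q) (s : ℕ) : S.Q := (fun a => S.δ a a a)^[s] X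

lemma interiorState_succ (X : S.Q) (s : ℕ) :
    S.interiorState X (s + 1) = S.δ (S.interiorState X s) (S.interiorState X s)
      (S.interiorState X s) :=
  Function.iterate_succ_apply' _ s X

/-- Every step eats one cell at each end of the uniform block, so after `s` steps it is still
uniform and its context no longer depends on its original length. -/
lemma exists_step_iterate_append_replicate_append (u v : List S.Q) (X : S.Q) (s : ℕ)
    (hs : ∀ i < s, S.interiorState X (i + 1) ≠ S.del) :
    ∃ P E : List S.Q, ∀ n, S.step^[s] (u ++ List.replicate (n + 2 * s) X ++ v)
      = P ++ List.replicate n (S.interiorState X s) ++ E := by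
  induction s with
  | zero => exact ⟨u, v, fun n => rfl⟩
  | succ s ih =>
    obtain ⟨P, E, hPE⟩ := ih fun i hi => hs i (by omega)
    obtain ⟨P', E', hstep⟩ := S.exists_step_append_replicate_append P E (S.interiorState X s)
    refine ⟨P', E', fun n => ?_⟩
    have hlen : n + 2 * (s + 1) = n + 2 + 2 * s := by ring
    rw [Function.iterate_succ_apply', hlen, hPE, hstep, ← interiorState_succ,
      List.filter_replicate, if_pos (by simpa using hs s (by omega))]

lemma exists_step_iterate_append_replicate_append_eq_const (u v : List S.Q) (X : S.Q) (s : ℕ)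
    (hs : ∀ i < s, S.interiorState X (i + 1) ≠ S.del)
    (hdel : S.interiorState X (s + 1) = S.del) :
    ∃ C : List S.Q, ∀ n, S.step^[s + 1] (u ++ List.replicate (n + 2 * (s + 1)) X ++ v) = C := by
  obtain ⟨P, E, hPE⟩ := S.exists_step_iterate_append_replicate_append u v X s hs
  obtain ⟨P', E', hstep⟩ := S.exists_step_append_replicate_append P E (S.interiorState X s)
  refine ⟨P' ++ E', fun n => ?_⟩
  have hlen : n + 2 * (s + 1) = n + 2 + 2 * s := by ring
  rw [Function.iterate_succ_apply', hlen, hPE, hstep, ← interiorState_succ,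
    List.filter_replicate, if_neg (by simp [hdel]), List.append_nil]

lemma step_iterate_replicate_ne_nil {X : S.Q} {t : ℕ}
    (ht : ∀ i < t, S.interiorState X (i + 1) ≠ S.del) :
    S.step^[t] (List.replicate (2 * t + 1) X) ≠ [] := by
  obtain ⟨P, E, hPE⟩ := S.exists_step_iterate_append_replicate_append [] [] X t ht
  have h := hPE 1
  rw [List.nil_append, List.append_nil, add_comm] at h
  simp [h]

lemma exists_min_interiorState_eq_del {X : S.Q} {t : ℕ}
    (hX : S.step^[t] (List.replicate (2 * t + 1) X) = []) :
    ∃ j < t, S.interiorState X (j + 1) = S.del ∧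
      ∀ i < j, S.interiorState X (i + 1) ≠ S.del := by
  have hex : ∃ j, j < t ∧ S.interiorState X (j + 1) = S.del := by
    by_contra! h
    exact S.step_iterate_replicate_ne_nil h hX
  obtain ⟨hlt, hdel⟩ := Nat.find_spec hex
  exact ⟨Nat.find hex, hlt, hdel, fun i hi hi' => Nat.find_min hex hi ⟨hi.trans hlt, hi'⟩⟩

lemma acceptsAt_append_replicate_append_iff {x : α} {j : ℕ}
    (hj : ∀ i < j, S.interiorState (S.embed x) (i + 1) ≠ S.del)
    (hdel : S.interiorState (S.embed x) (j + 1) = S.del) (z₁ z₂ : List α) (n s : ℕ) :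
    S.AcceptsAt (z₁ ++ List.replicate (n + 2 * (j + 1)) x ++ z₂) s ↔
      S.AcceptsAt (z₁ ++ List.replicate (2 * (j + 1)) x ++ z₂) s := by
  simp only [AcceptsAt, conf, List.map_append, List.map_replicate]
  rcases le_or_gt s j with hsj | hjs
  · obtain ⟨P, E, hPE⟩ := S.exists_step_iterate_append_replicate_append (z₁.map S.embed)
      (z₂.map S.embed) (S.embed x) s fun i hi => hj i (by omega)
    have hlen : ∀ m, m + 2 * (j + 1) = (m + 2 * (j - s) + 1) + 1 + 2 * s := by omega
    rw [hlen, hPE, ← zero_add (2 * (j + 1)), hlen, hPE,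
      List.head?_dropWhile_append_replicate_succ_append,
      List.head?_dropWhile_append_replicate_succ_append]
  · obtain ⟨r, rfl⟩ := Nat.exists_eq_add_of_lt hjs
    obtain ⟨C, hC⟩ := S.exists_step_iterate_append_replicate_append_eq_const (z₁.map S.embed)
      (z₂.map S.embed) (S.embed x) j hj hdel
    have hC₀ := hC 0
    rw [zero_add] at hC₀
    rw [show j + r + 1 = r + (j + 1) by omega]
    simp only [Function.iterate_add_apply S.step r (j + 1), hC, hC₀]

lemma mem_lang_append_replicate_append_iff {x : α} {j : ℕ}
    (hj : ∀ i < j, S.interiorState (S.embed x) (i + 1) ≠ S.del)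
    (hdel : S.interiorState (S.embed x) (j + 1) = S.del) (z₁ z₂ : List α) {m : ℕ}
    (hm : 2 * (j + 1) ≤ m) :
    z₁ ++ List.replicate m x ++ z₂ ∈ S.Lang ↔
      z₁ ++ List.replicate (2 * (j + 1)) x ++ z₂ ∈ S.Lang := by
  obtain ⟨n, rfl⟩ := Nat.exists_eq_add_of_le' hm
  exact exists_congr fun s => S.acceptsAt_append_replicate_append_iff hj hdel z₁ z₂ n s

end SCA

theorem sca_pumping_general {α : Type} (S : SCA α) (x : α) (t : ℕ)
    (hdel : S.step^[t] (List.replicate (2 * t + 1) (S.embed x)) = [])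
    (z₁ z₂ : List α) :
    z₁ ++ List.replicate (2 * t + 1) x ++ z₂ ∈ S.Lang ↔
      ∀ i : ℕ, z₁ ++ List.replicate (2 * t + 1 + i) x ++ z₂ ∈ S.Lang := by
  obtain ⟨j, hjt, hjdel, hjmin⟩ := S.exists_min_interiorState_eq_del hdel
  have hpump {m : ℕ} (hm : 2 * (j + 1) ≤ m) :=
    S.mem_lang_append_replicate_append_iff hjmin hjdel z₁ z₂ hm
  exact ⟨fun h i => (hpump (by omega)).2 ((hpump (by omega)).1 h), fun h => by simpa using h 0⟩

/-- SCA pumping lemma: if the minimal `t` with `Δ_S^t(x^{2t+1}) = ε` exists,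
then `z₁ x^{2t+1} z₂ ∈ L(S)` iff `z₁ x^{2t+1+i} z₂ ∈ L(S)` for all `i`. -/
theorem sca_pumping {α : Type} (S : SCA α) (x : α) (t : ℕ) (ht : 0 < t)
    (hdel : S.step^[t] (List.replicate (2 * t + 1) (S.embed x)) = [])
    (hmin : ∀ t' < t, S.step^[t'] (List.replicate (2 * t + 1) (S.embed x)) ≠ [])
    (z₁ z₂ : List α) (h₁ : z₁ ≠ []) (h₂ : z₂ ≠ []) :
    z₁ ++ List.replicate (2 * t + 1) x ++ z₂ ∈ S.Lang ↔
      ∀ i : ℕ, z₁ ++ List.replicate (2 * t + 1 + i) x ++ z₂ ∈ S.Lang :=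
  sca_pumping_general S x t hdel z₁ z₂
end

section
/- Every unary language accepted by a shrinking cellular automaton in o(n) time is either finite or cofinite (as a subset of {1}⁺). -/
/-!
On the input `1ⁿ`, after `t` steps every cell at distance more than `t` from both ends holds the
`t`-th iterate of `c ↦ δ c c c` on the input symbol, so as long as this bulk state has never been
deleted the configuration is `l ++ bulkᵏ ++ r` with `l`, `r` independent of `n = 2t + k`, and the
leftmost active cell at time `t` is the same for all `n > 2t`. If the bulk state is never deleted,
a sublinear acceptance time produces accepted words of length `n > 2t`, hence all longer words are
accepted. If it is deleted at step `s + 1`, the configurations from then on coincide for all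
`n ≥ 2s + 2`. Either way membership of `1ⁿ` is eventually constant.
-/

theorem Set.Infinite.exists_le_length {α : Type} [Finite α] {L : Set (List α)}
    (hL : L.Infinite) (N : ℕ) : ∃ w ∈ L, N ≤ w.length := by
  by_contra! h
  exact hL ((List.finite_length_lt α N).subset h)

namespace List

variable {β : Type} (p : β → Bool)

theorem head?_dropWhile_append_congr {l l' : List β}
    (h : (l.dropWhile p).head? = (l'.dropWhile p).head?) (a : List β) :
    ((a ++ l).dropWhile p).head? = ((a ++ l').dropWhile p).head? := by
  induction a with
  | nil => exact h
  | cons y a ih => cases hy : p y <;> simp [hy, ih]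

theorem head?_dropWhile_replicate_append (x : β) (b : List β) (k : ℕ) :
    ((replicate (k + 1) x ++ b).dropWhile p).head? = ((x :: b).dropWhile p).head? := by
  induction k with
  | zero => rfl
  | succ k ih => cases hx : p x <;> simp_all [replicate_succ]

end List

namespace SCA

attribute [local instance] SCA.decEq

variable {α : Type} (S : SCA α)

theorem step_eq (w : List S.Q) : S.step w = (S.raw w).filter (· ≠ S.del) := rfl

theorem acceptsAt_iff (w : List α) (t : ℕ) :
    S.AcceptsAt w t ↔ ∃ a, ((S.conf w t).dropWhile (· = S.q)).head? = some a ∧ S.accept a :=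
  Iff.rfl

theorem length_raw (w : List S.Q) : (S.raw w).length = w.length := by
  simp [raw]

theorem getElem_raw (w : List S.Q) (i : ℕ) (hi : i < (S.raw w).length) :
    (S.raw w)[i] =
      S.δ (if i = 0 then S.q else w.getD (i - 1) S.q) (w.getD i S.q) (w.getD (i + 1) S.q) := by
  simp [raw]

theorem raw_append_cons_cons (a b : List S.Q) (x y : S.Q) :
    S.raw (a ++ x :: y :: b) =
      (S.raw (a ++ [x, y])).take (a.length + 1) ++ (S.raw (x :: y :: b)).drop 1 := by
  have left : ∀ j < a.length + 2, (a ++ x :: y :: b).getD j S.q = (a ++ [x, y]).getD j S.q := by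
    intro j hj
    rw [show a ++ x :: y :: b = (a ++ [x, y]) ++ b by simp, List.getD_append _ _ _ _ (by simpa)]
  have right : ∀ j, (a ++ x :: y :: b).getD (a.length + j) S.q = (x :: y :: b).getD j S.q := by
    intro j
    rw [List.getD_append_right _ _ _ _ (by omega), Nat.add_sub_cancel_left]
  refine List.ext_getElem (by simp [length_raw]; omega) fun i hi₁ hi₂ => ?_
  by_cases hi : i < a.length + 1
  · rw [List.getElem_append_left (by simp [length_raw]; omega), List.getElem_take,
      getElem_raw, getElem_raw, left i (by omega), left (i + 1) (by omega)]
    split_ifs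
    · rfl
    · rw [left (i - 1) (by omega)]
  · obtain ⟨j, rfl⟩ : ∃ j, i = a.length + 1 + j := ⟨i - (a.length + 1), by omega⟩
    rw [List.getElem_append_right (by simp [length_raw]), List.getElem_drop,
      getElem_raw, getElem_raw, if_neg (by omega), if_neg (by omega)]
    simp only [List.length_take, length_raw, List.length_append, List.length_cons,
      List.length_nil]
    rw [show a.length + 1 + j - 1 = a.length + j by omega, right,
      show a.length + 1 + j = a.length + (1 + j) by omega, right,
      show a.length + (1 + j) + 1 = a.length + (1 + j + 1) by omega, right]
    congr 2 <;> omega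

theorem drop_one_raw_replicate_append (m : S.Q) (b : List S.Q) (k : ℕ) :
    (S.raw (List.replicate (k + 2) m ++ b)).drop 1 =
      List.replicate k (S.δ m m m) ++ (S.raw (m :: m :: b)).drop 1 := by
  induction k with
  | zero => rfl
  | succ k ih =>
    rw [show List.replicate (k + 3) m ++ b = [m] ++ m :: m :: (List.replicate k m ++ b) by
        simp [List.replicate_succ], raw_append_cons_cons,
      show m :: m :: (List.replicate k m ++ b) = List.replicate (k + 2) m ++ b by
        simp [List.replicate_succ], List.drop_append, ih]
    simp [raw, List.range_succ, List.replicate_succ]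

theorem raw_append_replicate_append (a b : List S.Q) (m : S.Q) (k : ℕ) :
    S.raw (a ++ (List.replicate (k + 2) m ++ b)) =
      (S.raw (a ++ [m, m])).take (a.length + 1) ++
        (List.replicate k (S.δ m m m) ++ (S.raw (m :: m :: b)).drop 1) := by
  rw [← drop_one_raw_replicate_append]
  exact S.raw_append_cons_cons a (List.replicate k m ++ b) m m

def bulk (m : S.Q) (t : ℕ) : S.Q := (fun c => S.δ c c c)^[t] m

theorem bulk_succ (m : S.Q) (t : ℕ) :
    S.bulk m (t + 1) = S.δ (S.bulk m t) (S.bulk m t) (S.bulk m t) :=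
  Function.iterate_succ_apply' _ _ _

theorem step_append_replicate_append (a b : List S.Q) (m : S.Q) (k : ℕ) :
    S.step (a ++ (List.replicate (k + 2) m ++ b)) =
      ((S.raw (a ++ [m, m])).take (a.length + 1)).filter (· ≠ S.del) ++
        ((List.replicate k (S.δ m m m)).filter (· ≠ S.del) ++
          ((S.raw (m :: m :: b)).drop 1).filter (· ≠ S.del)) := by
  rw [step_eq, raw_append_replicate_append, List.filter_append, List.filter_append]

theorem exists_step_iterate_replicate (m : S.Q) (t : ℕ)
    (h : ∀ s < t, S.bulk m (s + 1) ≠ S.del) :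
    ∃ l r : List S.Q, ∀ k,
      S.step^[t] (List.replicate (2 * t + k) m) = l ++ (List.replicate k (S.bulk m t) ++ r) := by
  induction t with
  | zero => exact ⟨[], [], fun k => by simp [bulk]⟩
  | succ t ih =>
    obtain ⟨l, r, hlr⟩ := ih fun s hs => h s (by omega)
    refine ⟨((S.raw (l ++ [S.bulk m t, S.bulk m t])).take (l.length + 1)).filter (· ≠ S.del),
      ((S.raw (S.bulk m t :: S.bulk m t :: r)).drop 1).filter (· ≠ S.del), fun k => ?_⟩
    rw [Function.iterate_succ_apply', show 2 * (t + 1) + k = 2 * t + (k + 2) by omega, hlr,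
      step_append_replicate_append, ← bulk_succ, List.filter_replicate,
      if_pos (by simpa using h t (by omega))]

theorem step_iterate_replicate_of_bulk_eq_del (m : S.Q) (t : ℕ)
    (h : ∀ s < t, S.bulk m (s + 1) ≠ S.del) (hdel : S.bulk m (t + 1) = S.del) (k : ℕ) :
    S.step^[t + 1] (List.replicate (2 * t + 2 + k) m) =
      S.step^[t + 1] (List.replicate (2 * t + 2) m) := by
  obtain ⟨l, r, hlr⟩ := S.exists_step_iterate_replicate m t h
  rw [Function.iterate_succ_apply', Function.iterate_succ_apply',
    show 2 * t + 2 + k = 2 * t + (k + 2) by omega, show 2 * t + 2 = 2 * t + (0 + 2) by omega, hlr,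
    hlr, step_append_replicate_append, step_append_replicate_append, ← bulk_succ, hdel]
  simp

theorem conf_replicate (a : α) (n t : ℕ) :
    S.conf (List.replicate n a) t = S.step^[t] (List.replicate n (S.embed a)) := by
  rw [conf, List.map_replicate]

theorem acceptsAt_replicate_iff (a : α) (t : ℕ) (h : ∀ s < t, S.bulk (S.embed a) (s + 1) ≠ S.del)
    {n n' : ℕ} (hn : 2 * t < n) (hn' : 2 * t < n') :
    S.AcceptsAt (List.replicate n a) t ↔ S.AcceptsAt (List.replicate n' a) t := by
  obtain ⟨l, r, hlr⟩ := S.exists_step_iterate_replicate (S.embed a) t h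
  have leader : ∀ k, ((S.conf (List.replicate (2 * t + k + 1) a) t).dropWhile (· = S.q)).head? =
      ((l ++ S.bulk (S.embed a) t :: r).dropWhile (· = S.q)).head? := fun k => by
    rw [conf_replicate, add_assoc, hlr]
    exact List.head?_dropWhile_append_congr _ (List.head?_dropWhile_replicate_append _ _ _ _) l
  obtain ⟨k, rfl⟩ := Nat.exists_eq_add_of_lt hn
  obtain ⟨k', rfl⟩ := Nat.exists_eq_add_of_lt hn'
  rw [acceptsAt_iff, acceptsAt_iff, leader, leader]

theorem conf_replicate_eq_of_bulk_eq_del (a : α) (t₀ : ℕ)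
    (h : ∀ s < t₀, S.bulk (S.embed a) (s + 1) ≠ S.del)
    (hdel : S.bulk (S.embed a) (t₀ + 1) = S.del) {n n' : ℕ} (hn : 2 * t₀ + 2 ≤ n)
    (hn' : 2 * t₀ + 2 ≤ n') {t : ℕ} (ht : t₀ < t) :
    S.conf (List.replicate n a) t = S.conf (List.replicate n' a) t := by
  obtain ⟨k, rfl⟩ := Nat.exists_eq_add_of_le hn
  obtain ⟨k', rfl⟩ := Nat.exists_eq_add_of_le hn'
  obtain ⟨u, rfl⟩ := Nat.exists_eq_add_of_lt ht
  rw [conf_replicate, conf_replicate, show t₀ + u + 1 = u + (t₀ + 1) by omega,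
    Function.iterate_add_apply S.step u, Function.iterate_add_apply S.step u,
    S.step_iterate_replicate_of_bulk_eq_del _ t₀ h hdel,
    S.step_iterate_replicate_of_bulk_eq_del _ t₀ h hdel k']

theorem replicate_mem_lang_iff_of_bulk_eq_del (a : α)
    (hdel : ∃ s, S.bulk (S.embed a) (s + 1) = S.del) :
    ∃ N, ∀ n ≥ N, ∀ n' ≥ N, (List.replicate n a ∈ S.Lang ↔ List.replicate n' a ∈ S.Lang) := by
  classical
  refine ⟨2 * Nat.find hdel + 2, fun n hn n' hn' => exists_congr fun t => ?_⟩
  have hmin : ∀ s < Nat.find hdel, S.bulk (S.embed a) (s + 1) ≠ S.del :=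
    fun s hs => Nat.find_min hdel hs
  rcases le_or_gt t (Nat.find hdel) with ht | ht
  · exact S.acceptsAt_replicate_iff a t (fun s hs => hmin s (by omega)) (by omega) (by omega)
  · rw [acceptsAt_iff, acceptsAt_iff,
      S.conf_replicate_eq_of_bulk_eq_del a _ hmin (Nat.find_spec hdel) hn hn' ht]

theorem exists_acceptsAt_two_mul_lt_length [Finite α] (T : ℕ → ℕ) (hinf : S.Lang.Infinite)
    (hTime : ∀ w ∈ S.Lang, ∃ t ≤ T w.length, S.AcceptsAt w t)
    (hSub : ∀ ε : ℝ, 0 < ε → ∀ᶠ n in Filter.atTop, (T n : ℝ) ≤ ε * n) :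
    ∃ w t, S.AcceptsAt w t ∧ 2 * t < w.length := by
  obtain ⟨N, hN⟩ := Filter.eventually_atTop.mp (hSub (1 / 3) (by norm_num))
  obtain ⟨w, hw, hlen⟩ := hinf.exists_le_length (N + 1)
  obtain ⟨t, htT, hacc⟩ := hTime w hw
  have ht : (t : ℝ) ≤ 1 / 3 * w.length := (Nat.cast_le.mpr htT).trans (hN _ (by omega))
  have h3t : 3 * t ≤ w.length := by exact_mod_cast (by linarith : (3 * t : ℝ) ≤ w.length)
  exact ⟨w, t, hacc, by omega⟩

end SCA

theorem sca_unary_finite_or_cofinite_general (L : Set (List Unit)) (h : InSCAo L) :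
    L.Finite ∨ ({w : List Unit | w ≠ []} \ L).Finite := by
  obtain ⟨S, T, rfl, hTime, hSub⟩ := h
  rcases S.Lang.finite_or_infinite with hfin | hinf
  · exact Or.inl hfin
  have unary (w : List Unit) : w = List.replicate w.length () :=
    List.eq_replicate_length.2 fun _ _ => rfl
  obtain ⟨N, hN⟩ : ∃ N, ∀ n ≥ N, List.replicate n () ∈ S.Lang := by
    by_cases hdel : ∃ s, S.bulk (S.embed ()) (s + 1) = S.del
    · obtain ⟨N, hN⟩ := S.replicate_mem_lang_iff_of_bulk_eq_del () hdel
      obtain ⟨w, hw, hNw⟩ := hinf.exists_le_length N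
      rw [unary w] at hw
      exact ⟨N, fun n hn => (hN _ hNw n hn).1 hw⟩
    · obtain ⟨w, t, hacc, ht⟩ := S.exists_acceptsAt_two_mul_lt_length T hinf hTime hSub
      rw [unary w] at hacc
      exact ⟨2 * t + 1, fun n hn =>
        ⟨t, (S.acceptsAt_replicate_iff () t (fun s _ hs => hdel ⟨s, hs⟩) ht (by omega)).1 hacc⟩⟩
  refine Or.inr ((List.finite_length_lt Unit N).subset fun w hw => ?_)
  by_contra! hlen
  exact hw.2 (unary w ▸ hN _ (not_lt.1 hlen))

/-- Every unary language accepted by an SCA in sublinear time is finite or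
cofinite (as a subset of the nonempty unary words). -/
theorem sca_unary_finite_or_cofinite (L : Set (List Unit))
    (hne : ∀ w ∈ L, w ≠ []) (h : InSCAo L) :
    L.Finite ∨ ({w : List Unit | w ≠ []} \ L).Finite :=
  sca_unary_finite_or_cofinite_general L h
end

section
/- For every fixed q ≥ 2, the language MOD_q = { w ∈ {0,1}⁺ : |w|₁ ≡ 0 (mod q) } is not in SCA[o(n)], and the majority language MAJ = { w ∈ {0,1}⁺ : |w|₁ ≥ |w|₀ } is not in SCA[o(n)]. -/
def MOD (q : ℕ) : Set (List Bool) := {w | w ≠ [] ∧ q ∣ w.count true}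

def MAJ : Set (List Bool) := {w | w ≠ [] ∧ w.count false ≤ w.count true}


namespace SCAproof
variable {α : Type} (S : SCA α)

/-- Recursive version of `raw` with explicit left and right contexts. -/
def rawAux : S.Q → List S.Q → S.Q → List S.Q
  | _, [], _ => []
  | l, [a], r => [S.δ l a r]
  | l, a :: b :: w, r => S.δ l a b :: rawAux a (b :: w) r

@[simp] lemma rawAux_nil (l r : S.Q) : rawAux S l [] r = [] := rfl
@[simp] lemma rawAux_single (l a r : S.Q) : rawAux S l [a] r = [S.δ l a r] := rfl
@[simp] lemma rawAux_cons₂ (l a b r : S.Q) (w : List S.Q) :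
    rawAux S l (a :: b :: w) r = S.δ l a b :: rawAux S a (b :: w) r := rfl

lemma rawAux_eq_map (w : List S.Q) : ∀ l : S.Q,
    rawAux S l w S.q = (List.range w.length).map fun i =>
      S.δ (if i = 0 then l else w.getD (i - 1) S.q) (w.getD i S.q) (w.getD (i + 1) S.q) := by
  induction w with
  | nil => intro l; simp
  | cons a w ih =>
    intro l
    cases w with
    | nil => simp [List.range_succ]
    | cons b w' =>
      rw [rawAux_cons₂, ih a]
      conv_rhs => rw [List.length_cons, List.range_succ_eq_map, List.map_cons, List.map_map]
      congr 1
      apply List.map_congr_left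
      intro i _
      cases i <;> simp [Function.comp]

lemma raw_eq_rawAux (w : List S.Q) : S.raw w = rawAux S S.q w S.q := by
  rw [SCA.raw, rawAux_eq_map]

lemma rawAux_append (r b : S.Q) (v : List S.Q) :
    ∀ (u : List S.Q) (l : S.Q),
      rawAux S l (u ++ b :: v) r = rawAux S l u b ++ rawAux S (u.getLastD l) (b :: v) r := by
  intro u
  induction u with
  | nil => intro l; simp
  | cons a u ih =>
    intro l
    cases u with
    | nil => cases v <;> simp
    | cons c u' =>
      simp only [List.cons_append, rawAux_cons₂, List.getLastD_cons] at ih ⊢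
      rw [ih a]

lemma rawAux_replicate (x : S.Q) : ∀ k : ℕ,
    rawAux S x (List.replicate k x) x = List.replicate k (S.δ x x x) := by
  intro k
  induction k with
  | zero => rfl
  | succ j ih =>
    cases j with
    | zero => rfl
    | succ j' =>
      have h1 : List.replicate (j' + 1 + 1) x = x :: x :: List.replicate j' x := rfl
      have h2 : (x : S.Q) :: List.replicate j' x = List.replicate (j' + 1) x := rfl
      rw [h1, rawAux_cons₂, h2, ih]
      rfl

lemma getLastD_replicate_succ (y : S.Q) : ∀ (j : ℕ) (d : S.Q),
    (List.replicate (j + 1) y).getLastD d = y := by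
  intro j
  induction j with
  | zero => intro d; rfl
  | succ j ih =>
    intro d
    rw [List.replicate_succ, List.getLastD_cons]
    exact ih y

lemma getLastD_concat' (u : List S.Q) (y : S.Q) : ∀ d : S.Q, (u ++ [y]).getLastD d = y := by
  induction u with
  | nil => intro d; rfl
  | cons a u ih =>
    intro d
    rw [List.cons_append, List.getLastD_cons]
    exact ih a

/-- The predicate used by `step` to keep cells. -/
def keep : S.Q → Bool := fun c => haveI := S.decEq; decide (c ≠ S.del)

lemma keep_eq_true {c : S.Q} (h : c ≠ S.del) : keep S c = true := by
  haveI := S.decEq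
  simp [keep, h]

lemma keep_eq_false {c : S.Q} (h : c = S.del) : keep S c = false := by
  haveI := S.decEq
  simp [keep, h]

lemma step_eq (w : List S.Q) : S.step w = (rawAux S S.q w S.q).filter (keep S) := by
  rw [SCA.step, raw_eq_rawAux]
  rfl

lemma filter_keep_replicate (k : ℕ) {y : S.Q} (h : y ≠ S.del) :
    (List.replicate k y).filter (keep S) = List.replicate k y := by
  apply List.filter_eq_self.mpr
  intro a ha
  rw [List.eq_of_mem_replicate ha]
  exact keep_eq_true S h

lemma filter_keep_replicate_del (k : ℕ) {y : S.Q} (h : y = S.del) :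
    (List.replicate k y).filter (keep S) = [] := by
  apply List.filter_eq_nil_iff.mpr
  intro a ha
  rw [List.eq_of_mem_replicate ha, keep_eq_false S h]
  simp

/-- Decomposition of one step on a configuration with a long uniform block. -/
lemma step_structure (y : S.Q) (U V : List S.Q) (j : ℕ) :
    S.step (U ++ List.replicate (j + 3) y ++ V) =
      (rawAux S S.q (U ++ [y]) y).filter (keep S) ++
        ((List.replicate (j + 1) (S.δ y y y)).filter (keep S) ++
          (rawAux S y (y :: V) S.q).filter (keep S)) := by
  have h1 : List.replicate (j + 3) y = y :: y :: (List.replicate j y ++ [y]) := by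
    rw [← List.replicate_succ']
    rfl
  have hsplit : U ++ List.replicate (j + 3) y ++ V
      = (U ++ [y]) ++ (y :: (List.replicate j y ++ y :: V)) := by
    rw [h1]
    simp
  have hsecond : rawAux S y (List.replicate (j + 1) y ++ y :: V) S.q
      = List.replicate (j + 1) (S.δ y y y) ++ rawAux S y (y :: V) S.q := by
    rw [rawAux_append S S.q y V (List.replicate (j + 1) y) y, rawAux_replicate,
      getLastD_replicate_succ]
  have hmid : (y :: (List.replicate j y ++ y :: V)) = (List.replicate (j + 1) y) ++ y :: V := by
    simp [List.replicate_succ]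
  rw [hsplit, step_eq, rawAux_append S S.q y (List.replicate j y ++ y :: V) (U ++ [y]) S.q,
    getLastD_concat', hmid, hsecond, List.filter_append, List.filter_append]

/-- Trajectory of the uniform interior state. -/
def traj (x0 : S.Q) : ℕ → S.Q
  | 0 => x0
  | t + 1 => S.δ (traj x0 t) (traj x0 t) (traj x0 t)

lemma iterate_structure (x0 : S.Q) (u : List S.Q) (t : ℕ)
    (h : ∀ i < t, traj S x0 (i + 1) ≠ S.del) :
    ∃ U V : List S.Q, ∀ m, 2 * t + 1 ≤ m →
      S.step^[t] (u ++ List.replicate m x0)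
        = U ++ List.replicate (m - 2 * t) (traj S x0 t) ++ V := by
  induction t with
  | zero =>
    refine ⟨u, [], fun m hm => ?_⟩
    simp [traj]
  | succ t ih =>
    obtain ⟨U, V, hUV⟩ := ih (fun i hi => h i (Nat.lt_succ_of_lt hi))
    set y := traj S x0 t with hy
    have hy' : traj S x0 (t + 1) ≠ S.del := h t (Nat.lt_succ_self t)
    refine ⟨(rawAux S S.q (U ++ [y]) y).filter (keep S),
      (rawAux S y (y :: V) S.q).filter (keep S), fun m hm => ?_⟩
    have hm' : 2 * t + 1 ≤ m := by omega
    have hj : m - 2 * t = (m - 2 * t - 3) + 3 := by omega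
    rw [Function.iterate_succ_apply', hUV m hm', hj, step_structure]
    have hrep : (List.replicate (m - 2 * t - 3 + 1) (S.δ y y y)).filter (keep S)
        = List.replicate (m - 2 * (t + 1)) (traj S x0 (t + 1)) := by
      have : S.δ y y y = traj S x0 (t + 1) := rfl
      rw [this, filter_keep_replicate _ _ hy']
      congr 1
      omega
    rw [hrep, List.append_assoc]

lemma iterate_collapse (x0 : S.Q) (u : List S.Q) (s : ℕ)
    (h : ∀ i < s, traj S x0 (i + 1) ≠ S.del) (hs : traj S x0 (s + 1) = S.del) :
    ∃ W : List S.Q, ∀ m, 2 * s + 3 ≤ m →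
      S.step^[s + 1] (u ++ List.replicate m x0) = W := by
  obtain ⟨U, V, hUV⟩ := iterate_structure S x0 u s h
  set y := traj S x0 s with hy
  refine ⟨(rawAux S S.q (U ++ [y]) y).filter (keep S) ++
    ([] ++ (rawAux S y (y :: V) S.q).filter (keep S)), fun m hm => ?_⟩
  have hm' : 2 * s + 1 ≤ m := by omega
  have hj : m - 2 * s = (m - 2 * s - 3) + 3 := by omega
  rw [Function.iterate_succ_apply', hUV m hm', hj, step_structure]
  congr 1
  congr 1
  apply filter_keep_replicate_del
  exact hs

lemma head?_dropWhile_block {β : Type} (p : β → Bool) (U V : List β) (a : β)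
    (k k' : ℕ) (hk : 1 ≤ k) (hk' : 1 ≤ k') :
    (List.dropWhile p (U ++ List.replicate k a ++ V)).head?
      = (List.dropWhile p (U ++ List.replicate k' a ++ V)).head? := by
  suffices H : ∀ n, 1 ≤ n → (List.dropWhile p (U ++ List.replicate n a ++ V)).head?
      = (if U.all p then (if p a then (List.dropWhile p V).head? else some a)
        else (List.dropWhile p U).head?) by rw [H k hk, H k' hk']
  intro n hn
  obtain ⟨n', rfl⟩ : ∃ n'', n = n'' + 1 := ⟨n - 1, by omega⟩
  rw [List.append_assoc, List.dropWhile_append]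
  cases hU : U.all p with
  | true =>
    have hnil : List.dropWhile p U = [] := List.dropWhile_eq_nil_iff.mpr (by
      intro x hx; exact (List.all_eq_true.mp hU) x hx)
    rw [hnil]
    simp only [List.isEmpty_nil, if_true]
    rw [List.replicate_succ, List.cons_append, List.dropWhile_cons]
    cases hpa : p a with
    | true =>
      simp only [if_true]
      rw [List.dropWhile_append]
      have hnil2 : List.dropWhile p (List.replicate n' a) = [] :=
        List.dropWhile_eq_nil_iff.mpr (by
          intro x hx; rw [List.eq_of_mem_replicate hx]; exact hpa)
      rw [hnil2]
      simp
    | false => simp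
  | false =>
    have hne : List.dropWhile p U ≠ [] := by
      intro hcon
      have hall : U.all p = true :=
        List.all_eq_true.mpr (List.dropWhile_eq_nil_iff.mp hcon)
      rw [hU] at hall
      exact Bool.false_ne_true hall
    have hie : (List.dropWhile p U).isEmpty = false := by
      cases hd : List.dropWhile p U with
      | nil => exact absurd hd hne
      | cons c l => rfl
    rw [hie]
    simp only [Bool.false_eq_true, if_false]
    rw [List.head?_append]
    cases hd : List.dropWhile p U with
    | nil => exact absurd hd hne
    | cons c l => rfl

/-- The predicate used by `AcceptsAt` to skip inactive cells. -/
def isQ : S.Q → Bool := fun c => haveI := S.decEq; decide (c = S.q)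

lemma acceptsAt_iff (w : List α) (t : ℕ) :
    S.AcceptsAt w t ↔
      ∃ a, ((S.conf w t).dropWhile (isQ S)).head? = some a ∧ S.accept a = true :=
  Iff.rfl

lemma accept_iff_of_structure (x : α) (u : List α) (t : ℕ)
    (h : ∀ i < t, traj S (S.embed x) (i + 1) ≠ S.del)
    {m m' : ℕ} (hm : 2 * t + 1 ≤ m) (hm' : 2 * t + 1 ≤ m') :
    (S.AcceptsAt (u ++ List.replicate m x) t ↔ S.AcceptsAt (u ++ List.replicate m' x) t) := by
  haveI := S.decEq
  obtain ⟨U, V, hUV⟩ := iterate_structure S (S.embed x) (u.map S.embed) t h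
  have hconf : ∀ n, 2 * t + 1 ≤ n → S.conf (u ++ List.replicate n x) t
      = U ++ List.replicate (n - 2 * t) (traj S (S.embed x) t) ++ V := by
    intro n hn
    rw [SCA.conf, List.map_append, List.map_replicate]
    exact hUV n hn
  have hhead :
      ((S.conf (u ++ List.replicate m x) t).dropWhile (isQ S)).head?
      = ((S.conf (u ++ List.replicate m' x) t).dropWhile (isQ S)).head? := by
    rw [hconf m hm, hconf m' hm']
    exact head?_dropWhile_block _ U V _ _ _ (by omega) (by omega)
  rw [acceptsAt_iff, acceptsAt_iff]
  simp only [hhead]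

lemma pump (x : α) :
    ∃ N : ℕ, 1 ≤ N ∧ ∀ (u : List α) (t m m' : ℕ), N + 2 * t ≤ m → N + 2 * t ≤ m' →
      (S.AcceptsAt (u ++ List.replicate m x) t ↔ S.AcceptsAt (u ++ List.replicate m' x) t) := by
  classical
  by_cases hcol : ∃ s, traj S (S.embed x) (s + 1) = S.del
  · have hs : traj S (S.embed x) (Nat.find hcol + 1) = S.del := Nat.find_spec hcol
    set s := Nat.find hcol with hsdef
    have hmin : ∀ i < s, traj S (S.embed x) (i + 1) ≠ S.del := fun i hi => Nat.find_min hcol hi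
    refine ⟨2 * s + 3, by omega, fun u t m m' hm hm' => ?_⟩
    by_cases hts : t ≤ s
    · exact accept_iff_of_structure S x u t
        (fun i hi => hmin i (lt_of_lt_of_le hi hts)) (by omega) (by omega)
    · obtain ⟨W, hW⟩ := iterate_collapse S (S.embed x) (u.map S.embed) s hmin hs
      have hconf : ∀ n, 2 * s + 3 ≤ n →
          S.conf (u ++ List.replicate n x) t = S.step^[t - (s + 1)] W := by
        intro n hn
        rw [SCA.conf, List.map_append, List.map_replicate]
        have ht : t = (t - (s + 1)) + (s + 1) := by omega
        conv_lhs => rw [ht, Function.iterate_add_apply]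
        rw [hW n hn]
      have hcc : S.conf (u ++ List.replicate m x) t = S.conf (u ++ List.replicate m' x) t := by
        rw [hconf m (by omega), hconf m' (by omega)]
      rw [acceptsAt_iff, acceptsAt_iff, hcc]
  · push_neg at hcol
    refine ⟨1, le_refl 1, fun u t m m' hm hm' => ?_⟩
    exact accept_iff_of_structure S x u t (fun i _ => hcol i) (by omega) (by omega)

end SCAproof

theorem mod_maj_not_in_sca_sublinear' (q : ℕ) (hq : 2 ≤ q) :
    ¬ InSCAo (MOD q) ∧ ¬ InSCAo MAJ := by
  constructor
  · rintro ⟨S, T, hLang, hTime, hSub⟩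
    obtain ⟨N, hN1, hpump⟩ := SCAproof.pump S true
    obtain ⟨n0, hn0⟩ := Filter.eventually_atTop.mp (hSub (1/8) (by norm_num))
    set m := q * (n0 + 8 * N + 1) with hmdef
    have hqm : q ∣ m := Dvd.intro _ rfl
    have hm1 : n0 + 8 * N + 1 ≤ m := Nat.le_mul_of_pos_left _ (by omega)
    have hwmem : List.replicate m true ∈ MOD q := by
      refine ⟨?_, ?_⟩
      · have : m ≠ 0 := by omega
        simp [this]
      · rw [List.count_replicate_self]; exact hqm
    obtain ⟨t, ht, hacc⟩ := hTime _ hwmem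
    rw [List.length_replicate] at ht
    have hTm : 8 * T m ≤ m := by
      have h := hn0 m (by omega)
      have h' : (8 * T m : ℝ) ≤ (m : ℝ) := by push_cast at h ⊢; linarith
      exact_mod_cast h'
    have h8t : 8 * t ≤ m := by omega
    have hacc' : S.AcceptsAt ([] ++ List.replicate m true) t := by simpa using hacc
    have hacc2 := (hpump [] t m (m + 1) (by omega) (by omega)).mp hacc'
    have hmem2 : List.replicate (m + 1) true ∈ MOD q := by
      rw [← hLang]; exact ⟨t, by simpa using hacc2⟩
    obtain ⟨-, hdvd⟩ := hmem2
    rw [List.count_replicate_self] at hdvd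
    have hd1 : q ∣ 1 := by
      have := Nat.dvd_sub hdvd hqm
      simpa using this
    have := Nat.le_of_dvd one_pos hd1
    omega
  · rintro ⟨S, T, hLang, hTime, hSub⟩
    obtain ⟨N, hN1, hpump⟩ := SCAproof.pump S false
    obtain ⟨n0, hn0⟩ := Filter.eventually_atTop.mp (hSub (1/16) (by norm_num))
    set a := n0 + 8 * N + 1 with hadef
    have hwmem : List.replicate a true ++ List.replicate a false ∈ MAJ := by
      refine ⟨?_, ?_⟩
      · have : a ≠ 0 := by omega
        simp [this]
      · simp [List.count_append, List.count_replicate]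
    obtain ⟨t, ht, hacc⟩ := hTime _ hwmem
    rw [List.length_append, List.length_replicate, List.length_replicate] at ht
    have hTa : 16 * T (a + a) ≤ a + a := by
      have h := hn0 (a + a) (by omega)
      have h' : (16 * T (a + a) : ℝ) ≤ ((a + a : ℕ) : ℝ) := by push_cast at h ⊢; linarith
      exact_mod_cast h'
    have h8t : 8 * t ≤ a := by omega
    have hacc2 := (hpump (List.replicate a true) t a (a + 1) (by omega) (by omega)).mp hacc
    have hmem2 : List.replicate a true ++ List.replicate (a + 1) false ∈ MAJ := by
      rw [← hLang]; exact ⟨t, hacc2⟩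
    obtain ⟨-, hcount⟩ := hmem2
    rw [List.count_append, List.count_append, List.count_replicate_self,
      List.count_replicate_self, List.count_replicate, List.count_replicate] at hcount
    simp at hcount

/-- Neither `MOD_q` (for `q ≥ 2`) nor `MAJ` is in `SCA[o(n)]`. -/
theorem mod_maj_not_in_sca_sublinear (q : ℕ) (hq : 2 ≤ q) :
    ¬ InSCAo (MOD q) ∧ ¬ InSCAo MAJ :=
  mod_maj_not_in_sca_sublinear' q hq
end

section
/- The language { w ∈ {0,1}⁺ : w(0) = w(|w|−1) } (first symbol equals last symbol) is accepted by a shrinking cellular automaton in O(1) time, but is not accepted by any (non-shrinking) cellular automaton in o(n) time. -/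
/-- A (non-shrinking) bounded one-dimensional cellular automaton. -/
structure CA (α : Type) where
  Q : Type
  fintypeQ : Fintype Q
  decEq : DecidableEq Q
  δ : Q → Q → Q → Q
  q : Q
  embed : α → Q
  accept : Q → Bool
  inactive : ∀ a b, δ a q b = q
  embed_ne_q : ∀ x, embed x ≠ q

namespace CA
variable {α : Type} (A : CA α)

/-- The global transition function (boundary cells see the inactive state). -/
def step (w : List A.Q) : List A.Q :=
  (List.range w.length).map fun i =>
    A.δ (if i = 0 then A.q else w.getD (i - 1) A.q) (w.getD i A.q) (w.getD (i + 1) A.q)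

def conf (w : List α) (t : ℕ) : List A.Q := A.step^[t] (w.map A.embed)

/-- Acceptance is signaled by cell zero. -/
def AcceptsAt (w : List α) (t : ℕ) : Prop :=
  ∃ a, (A.conf w t).head? = some a ∧ A.accept a = true

def Lang : Set (List α) := {w | ∃ t, A.AcceptsAt w t}

end CA

/-- `L ∈ CA[o(n)]`. -/
def InCAo {α : Type} (L : Set (List α)) : Prop :=
  ∃ (A : CA α) (T : ℕ → ℕ), A.Lang = L ∧
    (∀ w ∈ L, ∃ t ≤ T w.length, A.AcceptsAt w t) ∧
    (∀ ε : ℝ, 0 < ε → ∀ᶠ n in Filter.atTop, (T n : ℝ) ≤ ε * n)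

/-- Words whose first symbol equals their last symbol. -/
def FL : Set (List Bool) := {w | w ≠ [] ∧ w.head? = w.getLast?}


/-! The shrinking automaton deletes every inner cell in its first step, which leaves the first
and the last input cell adjacent; in the second step the first cell compares their symbols.
A non-shrinking automaton moves information by at most one cell per step, so at time `t` cell
zero depends only on the first `t + 1` input symbols. In time `o(n)` it therefore cannot tell
`1ⁿ⁻¹1` from `1ⁿ⁻¹0`. -/

/-- `mapNbhd δ q l w` applies `δ` to every cell of `w`; the left neighbour of the first cell
is `l`, the right neighbour of the last cell is `q`. -/
def mapNbhd {Q : Type} (δ : Q → Q → Q → Q) (q : Q) : Q → List Q → List Q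
  | _, [] => []
  | l, c :: w => δ l c (w.headD q) :: mapNbhd δ q c w

section mapNbhd
variable {Q : Type} (δ : Q → Q → Q → Q) (q : Q)

theorem range_map_eq_mapNbhd (l : Q) (w : List Q) :
    (List.range w.length).map (fun i => δ ((l :: w).getD i q) (w.getD i q) (w.getD (i + 1) q))
      = mapNbhd δ q l w := by
  induction w generalizing l with
  | nil => rfl
  | cons c w ih =>
    rw [List.length_cons, List.range_succ_eq_map, List.map_cons, List.map_map, mapNbhd, ← ih c]
    congr 1
    cases w <;> rfl

theorem range_map_eq_mapNbhd_q (w : List Q) :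
    (List.range w.length).map
        (fun i => δ (if i = 0 then q else w.getD (i - 1) q) (w.getD i q) (w.getD (i + 1) q))
      = mapNbhd δ q q w := by
  rw [← range_map_eq_mapNbhd]
  congr! 3 with i
  cases i <;> simp

theorem take_mapNbhd_eq_of_take_eq {u v : List Q} (l : Q) (k : ℕ)
    (h : u.take (k + 1) = v.take (k + 1)) :
    (mapNbhd δ q l u).take k = (mapNbhd δ q l v).take k := by
  induction k generalizing l u v with
  | zero => simp
  | succ k ih =>
    match u, v, h with
    | [], [], _ => rfl
    | a :: u, b :: v, h =>
      simp only [List.take_succ_cons, List.cons.injEq] at h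
      obtain ⟨rfl, h⟩ := h
      have hhead : u.headD q = v.headD q := by
        have := congrArg List.head? h
        simp only [List.head?_take, Nat.add_one_ne_zero, if_false] at this
        simp only [List.headD_eq_head?_getD, this]
      simp only [mapNbhd, List.take_succ_cons, hhead, ih a h]

end mapNbhd

theorem cons_append_singleton_mem_FL {x y : Bool} {l : List Bool} :
    x :: (l ++ [y]) ∈ FL ↔ x = y := by
  simp [FL, List.getLast?_cons]

namespace CA
variable {α : Type} (A : CA α)

theorem step_eq_mapNbhd (u : List A.Q) : A.step u = mapNbhd A.δ A.q A.q u :=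
  range_map_eq_mapNbhd_q A.δ A.q u

theorem take_conf_eq_of_take_eq {w₁ w₂ : List α} (t k : ℕ)
    (h : w₁.take (t + k) = w₂.take (t + k)) :
    (A.conf w₁ t).take k = (A.conf w₂ t).take k := by
  induction t generalizing k with
  | zero => simpa [conf, ← List.map_take] using congrArg (List.map A.embed) h
  | succ t ih =>
    simp only [conf, Function.iterate_succ_apply', step_eq_mapNbhd] at ih ⊢
    rw [Nat.add_right_comm] at h
    exact take_mapNbhd_eq_of_take_eq _ _ _ _ (ih (k + 1) h)

theorem acceptsAt_iff_of_take_eq {w₁ w₂ : List α} (t : ℕ)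
    (h : w₁.take (t + 1) = w₂.take (t + 1)) :
    A.AcceptsAt w₁ t ↔ A.AcceptsAt w₂ t := by
  have := congrArg List.head? (A.take_conf_eq_of_take_eq t 1 h)
  simp only [List.head?_take, Nat.one_ne_zero, if_false] at this
  simp only [AcceptsAt, this]

end CA

theorem eventually_add_two_le_of_sublinear {T : ℕ → ℕ}
    (hT : ∀ ε : ℝ, 0 < ε → ∀ᶠ n in Filter.atTop, (T n : ℝ) ≤ ε * n) :
    ∀ᶠ n in Filter.atTop, T n + 2 ≤ n := by
  filter_upwards [hT (1 / 2) (by norm_num), Filter.eventually_ge_atTop 4] with n hTn hn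
  have hn' : (4 : ℝ) ≤ n := by exact_mod_cast hn
  exact_mod_cast (by linarith : (T n : ℝ) + 2 ≤ n)

theorem InCAo.exists_forall_append_mem {α : Type} {L : Set (List α)} (hL : InCAo L) :
    ∃ N, ∀ u : List α, N ≤ u.length → ∀ a b, u ++ [a] ∈ L → u ++ [b] ∈ L := by
  obtain ⟨A, T, hLang, hAcc, hT⟩ := hL
  obtain ⟨N, hN⟩ := Filter.eventually_atTop.mp (eventually_add_two_le_of_sublinear hT)
  refine ⟨N, fun u hu a b ha => ?_⟩
  obtain ⟨t, ht, hacc⟩ := hAcc _ ha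
  have htu : t + 1 ≤ u.length := by
    have := hN (u.length + 1) (by omega)
    simp only [List.length_append, List.length_singleton] at ht
    omega
  have htake : (u ++ [a]).take (t + 1) = (u ++ [b]).take (t + 1) := by
    rw [List.take_append_of_le_length htu, List.take_append_of_le_length htu]
  rw [← hLang]
  exact ⟨t, (A.acceptsAt_iff_of_take_eq t htake).mp hacc⟩

theorem not_inCAo_FL : ¬ InCAo FL := by
  intro h
  obtain ⟨N, hN⟩ := h.exists_forall_append_mem
  have := hN (true :: List.replicate N true) (by simp) true false
    (cons_append_singleton_mem_FL.mpr rfl)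
  exact absurd (cons_append_singleton_mem_FL.mp this) (by decide)

namespace SCA
variable {α : Type} (S : SCA α)

theorem raw_eq_mapNbhd (u : List S.Q) : S.raw u = mapNbhd S.δ S.q S.q u :=
  range_map_eq_mapNbhd_q S.δ S.q u

theorem conf_add (w : List α) (t k : ℕ) : S.conf w (t + k) = S.step^[t] (S.conf w k) :=
  Function.iterate_add_apply _ _ _ _

theorem acceptsAt_iff_of_conf_eq_cons {w : List α} {t : ℕ} {c : S.Q} {r : List S.Q}
    (h : S.conf w t = c :: r) (hc : c ≠ S.q) : S.AcceptsAt w t ↔ S.accept c = true := by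
  simp [AcceptsAt, h, hc]

end SCA

namespace FirstEqLast

inductive St where
  | q | del | sym (b : Bool) | first (b : Bool) | last (b : Bool) | acc | rej
  deriving DecidableEq, Fintype

def rule : St → St → St → St
  | _, .q, _ => .q
  | .q, .sym _, .q => .acc
  | .q, .sym b, _ => .first b
  | _, .sym b, .q => .last b
  | _, .sym _, _ => .del
  | _, .first b, .last c => if b = c then .acc else .rej
  | _, .first _, _ => .rej
  | _, .last _, _ => .del
  | _, c, _ => c

abbrev sca : SCA Bool where
  Q := St
  fintypeQ := inferInstance
  decEq := inferInstance
  δ := rule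
  q := .q
  del := .del
  embed := .sym
  accept := (· == .acc)
  del_ne_q := by decide
  inactive := fun _ _ => rfl
  embed_ne_q := by decide

theorem mapNbhd_sym_append (l : List Bool) (a y : Bool) :
    mapNbhd rule .q (.sym a) ((l ++ [y]).map .sym) = List.replicate l.length .del ++ [.last y] := by
  induction l generalizing a with
  | nil => rfl
  | cons b l ih =>
    rw [List.cons_append, List.map_cons, mapNbhd, ih b]
    cases l <;> rfl

theorem conf_cons_append_one (x y : Bool) (l : List Bool) :
    sca.conf (x :: (l ++ [y])) 1 = [.first x, .last y] := by
  rw [SCA.conf, Function.iterate_one, SCA.step, SCA.raw_eq_mapNbhd, List.map_cons, mapNbhd,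
    mapNbhd_sym_append]
  cases l <;> simp [rule, List.filter_append]

theorem conf_nil (t : ℕ) : sca.conf [] t = [] :=
  Function.iterate_fixed rfl t

theorem conf_singleton (x : Bool) (t : ℕ) : sca.conf [x] (t + 1) = [.acc] := by
  rw [SCA.conf_add, show sca.conf [x] 1 = [.acc] by cases x <;> rfl]
  exact Function.iterate_fixed rfl t

theorem conf_cons_append_add_two (x y : Bool) (l : List Bool) (t : ℕ) :
    sca.conf (x :: (l ++ [y])) (t + 2) = [if x = y then .acc else .rej] := by
  rw [SCA.conf_add, SCA.conf_add _ _ 1 1, Function.iterate_one, conf_cons_append_one]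
  cases x <;> cases y <;> exact Function.iterate_fixed rfl t

theorem acceptsAt_iff (w : List Bool) (t : ℕ) :
    sca.AcceptsAt w t ↔ w ∈ FL ∧ min w.length 2 ≤ t := by
  rcases w with _ | ⟨x, w⟩
  · simp [SCA.AcceptsAt, conf_nil, FL]
  rcases w.eq_nil_or_concat' with rfl | ⟨l, y, rfl⟩
  · rcases t with _ | t
    · simp [sca.acceptsAt_iff_of_conf_eq_cons (w := [x]) (t := 0) rfl nofun]
    · simp [sca.acceptsAt_iff_of_conf_eq_cons (conf_singleton x t) nofun, FL]
  · rw [cons_append_singleton_mem_FL]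
    match t with
    | 0 => simp [sca.acceptsAt_iff_of_conf_eq_cons (w := x :: (l ++ [y])) (t := 0) rfl nofun]
    | 1 => simp [sca.acceptsAt_iff_of_conf_eq_cons (conf_cons_append_one x y l) nofun]
    | t + 2 =>
      rw [sca.acceptsAt_iff_of_conf_eq_cons (conf_cons_append_add_two x y l t) (by split <;> nofun)]
      split <;> simp_all

end FirstEqLast

/-- `FL` is accepted by an SCA in `O(1)` time, but by no (non-shrinking) CA
in `o(n)` time. -/
theorem first_eq_last_sca_not_ca :
    (∃ (S : SCA Bool) (C : ℕ), S.Lang = FL ∧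
      ∀ w ∈ FL, ∃ t ≤ C, S.AcceptsAt w t) ∧
    ¬ InCAo FL := by
  have accepts_two : ∀ w ∈ FL, FirstEqLast.sca.AcceptsAt w 2 := fun w hw =>
    (FirstEqLast.acceptsAt_iff w 2).mpr ⟨hw, min_le_right _ _⟩
  have lang_eq : FirstEqLast.sca.Lang = FL := Set.ext fun w =>
    ⟨fun ⟨t, ht⟩ => ((FirstEqLast.acceptsAt_iff w t).mp ht).1, fun hw => ⟨2, accepts_two w hw⟩⟩
  exact ⟨⟨FirstEqLast.sca, 2, lang_eq, fun w hw => ⟨2, le_rfl, accepts_two w hw⟩⟩, not_inCAo_FL⟩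
end

section
/- If a language L is accepted by an SCA with computable time bound t(n), then the m-one-way communication complexity of L is O(t(N)): there exist (non-uniform) algorithms A_N and B_N such that on input w of length N split as w_A = w[0..m(N)−1] and w_B = w[m(N)..N−1], B_N sends a message of length O(t(N)) bits to A_N, after which A_N correctly decides whether w ∈ L. -/
namespace SCA
variable {α : Type} (S : SCA α)

/-- The unfiltered local update of the "known" prefix `p'` whose right
neighbour (beyond the end) is `r`. -/
def frontRaw (p' : List S.Q) (r : S.Q) : List S.Q :=
  (List.range p'.length).map fun j =>
    S.δ (if j = 0 then S.q else p'.getD (j-1) S.q) (p'.getD j S.q)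
      (if j + 1 = p'.length then r else p'.getD (j+1) S.q)

/-- The unfiltered local update of the strict tail of the suffix `z`. -/
def tailRaw (z : List S.Q) : List S.Q :=
  (List.range (z.length - 1)).map fun j =>
    S.δ (z.getD j S.q) (z.getD (j+1) S.q) (z.getD (j+2) S.q)

def pstep (p : List S.Q) (i : S.Q × S.Q × Bool × Bool) : List S.Q :=
  haveI := S.decEq
  (S.frontRaw (if i.2.2.1 then p ++ [i.1] else p) i.2.1).filter (fun c => decide (c ≠ S.del))

def dstep (z : List S.Q) : List S.Q :=
  haveI := S.decEq
  (S.tailRaw z).filter (fun c => decide (c ≠ S.del))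

/-- whether the leftmost active cell of `z` is accepting. -/
def bAcc (z : List S.Q) : Bool :=
  haveI := S.decEq
  ((z.dropWhile (fun c => decide (c = S.q))).head?.map S.accept).getD false

def info (z : List S.Q) : S.Q × S.Q × Bool × Bool :=
  haveI := S.decEq
  (z.getD 0 S.q, z.getD 1 S.q, !z.isEmpty, S.bAcc z)

lemma getD_drop_one (z : List S.Q) (j : ℕ) (d : S.Q) :
    (z.drop 1).getD j d = z.getD (j+1) d := by
  cases z <;> simp [List.getD]

lemma raw_append (p z : List S.Q) :
    S.raw (p ++ z) = S.frontRaw (p ++ z.take 1) (z.getD 1 S.q) ++ S.tailRaw z := by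
  have hsplit : p ++ z = (p ++ z.take 1) ++ z.drop 1 := by
    rw [List.append_assoc, List.take_append_drop]
  have hfl : (p ++ z.take 1).length = p.length + min 1 z.length := by simp
  have hlen : ∀ r, (S.frontRaw (p ++ z.take 1) r).length = (p ++ z.take 1).length := by
    intro r; simp [frontRaw]
  apply List.ext_getElem
  · simp only [raw, frontRaw, tailRaw, List.length_map, List.length_range,
      List.length_append, List.length_take]
    omega
  · intro i h1 h2
    have hi : i < p.length + z.length := by
      simpa [raw] using h1
    rw [List.getElem_append]
    by_cases hfront : i < (S.frontRaw (p ++ z.take 1) (z.getD 1 S.q)).length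
    · rw [dif_pos hfront]
      rw [hlen] at hfront
      simp only [raw, frontRaw, List.getElem_map, List.getElem_range]
      have e1 : (if i = 0 then S.q else (p ++ z).getD (i-1) S.q)
          = (if i = 0 then S.q else (p ++ z.take 1).getD (i-1) S.q) := by
        split
        · rfl
        · rw [hsplit, List.getD_append _ _ _ _ (by omega)]
      have e2 : (p ++ z).getD i S.q = (p ++ z.take 1).getD i S.q := by
        rw [hsplit, List.getD_append _ _ _ _ (by omega)]
      have e3 : (p ++ z).getD (i+1) S.q
          = (if i + 1 = (p ++ z.take 1).length then z.getD 1 S.q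
             else (p ++ z.take 1).getD (i+1) S.q) := by
        split
        · rename_i hend
          rw [hsplit, List.getD_append_right _ _ _ _ (by omega),
            (by omega : i + 1 - (p ++ z.take 1).length = 0), S.getD_drop_one]
        · rename_i hend
          rw [hsplit, List.getD_append _ _ _ _ (by omega)]
      rw [e1, e2, e3]
    · rw [dif_neg hfront]
      rw [hlen] at hfront
      push_neg at hfront
      have hz : z ≠ [] := by
        intro h; subst h; simp at hi; omega
      have hfl1 : (p ++ z.take 1).length = p.length + 1 := by
        cases z
        · exact absurd rfl hz
        · simp
      simp only [raw, tailRaw, List.getElem_map, List.getElem_range, hlen]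
      rw [if_neg (by omega : ¬ i = 0)]
      rw [List.getD_append_right p z _ _ (by omega : p.length ≤ i - 1),
          List.getD_append_right p z _ _ (by omega : p.length ≤ i),
          List.getD_append_right p z _ _ (by omega : p.length ≤ i + 1),
          (by omega : i - 1 - p.length = i - (p ++ z.take 1).length),
          (by omega : i - p.length = i - (p ++ z.take 1).length + 1),
          (by omega : i + 1 - p.length = i - (p ++ z.take 1).length + 2)]

lemma step_append (p z : List S.Q) :
    S.step (p ++ z) = S.pstep p (S.info z) ++ S.dstep z := by
  haveI := S.decEq
  have h1 : (if (S.info z).2.2.1 then p ++ [(S.info z).1] else p) = p ++ z.take 1 := by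
    cases z <;> simp [info]
  show (S.raw (p ++ z)).filter _ = _
  rw [S.raw_append p z, List.filter_append]
  cases z <;> simp [pstep, dstep, info, List.getD]

/-- `B`'s private simulation of the clean suffix. -/
def Dits (v : List α) (s : ℕ) : List S.Q := S.dstep^[s] (v.map S.embed)

/-- The information `B` transmits. -/
def infos (v : List α) (n : ℕ) : List (S.Q × S.Q × Bool × Bool) :=
  (List.range n).map fun s => S.info (S.Dits v s)

/-- `A`'s reconstruction of the contaminated prefix. -/
def runP (p : List S.Q) (l : List (S.Q × S.Q × Bool × Bool)) : List S.Q :=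
  l.foldl S.pstep p

lemma conf_eq (u v : List α) (s : ℕ) :
    S.conf (u ++ v) s = S.runP (u.map S.embed) (S.infos v s) ++ S.Dits v s := by
  induction s with
  | zero => simp [conf, Dits, infos, runP]
  | succ s ih =>
      have h1 : S.conf (u ++ v) (s+1) = S.step (S.conf (u ++ v) s) :=
        Function.iterate_succ_apply' _ _ _
      have h2 : S.Dits v (s+1) = S.dstep (S.Dits v s) :=
        Function.iterate_succ_apply' _ _ _
      have h3 : S.infos v (s+1) = S.infos v s ++ [S.info (S.Dits v s)] := by
        simp [infos, List.range_succ]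
      rw [h1, ih, S.step_append, h2, h3]
      congr 1
      simp [runP, List.foldl_append]

lemma acceptsAt_iff_s10 (w : List α) (s : ℕ) :
    S.AcceptsAt w s ↔ S.bAcc (S.conf w s) = true := by
  unfold AcceptsAt bAcc
  cases h : ((S.conf w s).dropWhile (fun c => @decide (c = S.q) (S.decEq c S.q))).head? with
  | none => simp
  | some a => simp

lemma bAcc_append (p z : List S.Q) :
    S.bAcc (p ++ z)
      = ((p.dropWhile (fun c => @decide (c = S.q) (S.decEq c S.q))).head?.map S.accept).getD
          (S.bAcc z) := by
  haveI := S.decEq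
  unfold bAcc
  rw [List.dropWhile_append]
  split
  · rename_i h
    rw [List.isEmpty_iff] at h
    rw [h]
    rfl
  · rename_i h
    rw [List.isEmpty_iff] at h
    rw [List.head?_append]
    cases hh : (p.dropWhile (fun c => @decide (c = S.q) (S.decEq c S.q))).head? with
    | none => exact absurd (List.head?_eq_none_iff.mp hh) h
    | some a => rfl

/-- `A`'s decision procedure given its own half and the decoded message. -/
def decG (p0 : List S.Q) (l : List (S.Q × S.Q × Bool × Bool)) : Bool :=
  haveI := S.decEq
  (List.range l.length).any fun s =>
    (((S.runP p0 (l.take s)).dropWhile (fun c => decide (c = S.q))).head?.map S.accept).getD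
      (l.getD s (S.q, S.q, false, false)).2.2.2

lemma decG_infos (u v : List α) (T : ℕ) :
    S.decG (u.map S.embed) (S.infos v (T+1)) = true ↔ ∃ s ≤ T, S.AcceptsAt (u ++ v) s := by
  haveI := S.decEq
  have hlen : (S.infos v (T+1)).length = T + 1 := by simp [infos]
  have ht : ∀ s, s < T + 1 → (S.infos v (T+1)).take s = S.infos v s := by
    intro s hs
    simp only [infos, ← List.map_take, List.take_range,
      show s ⊓ (T+1) = s from by omega]
  have hg : ∀ s, s < T + 1 →
      (S.infos v (T+1)).getD s (S.q, S.q, false, false) = S.info (S.Dits v s) := by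
    intro s hs
    rw [List.getD_eq_getElem _ _ (by rw [hlen]; exact hs)]
    simp [infos]
  unfold decG
  rw [hlen, List.any_eq_true]
  constructor
  · rintro ⟨s, hs, h⟩
    rw [List.mem_range] at hs
    refine ⟨s, by omega, ?_⟩
    rw [S.acceptsAt_iff_s10, S.conf_eq, S.bAcc_append]
    rw [ht s hs, hg s hs] at h
    exact h
  · rintro ⟨s, hs, h⟩
    refine ⟨s, List.mem_range.mpr (by omega), ?_⟩
    rw [S.acceptsAt_iff_s10, S.conf_eq, S.bAcc_append] at h
    rw [ht s (by omega), hg s (by omega)]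
    exact h

/-- Fixed-width encoding of a transmitted tuple. -/
def encT (f : S.Q → List Bool) (i : S.Q × S.Q × Bool × Bool) : List Bool :=
  f i.1 ++ f i.2.1 ++ [i.2.2.1, i.2.2.2]

/-- Encoding of the whole message. -/
def encL (f : S.Q → List Bool) : List (S.Q × S.Q × Bool × Bool) → List Bool
  | [] => []
  | i :: r => S.encT f i ++ encL f r

lemma length_encT (f : S.Q → List Bool) (k : ℕ) (hlen : ∀ a, (f a).length = k)
    (i : S.Q × S.Q × Bool × Bool) : (S.encT f i).length = k + k + 2 := by
  simp [encT, hlen]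
  ring

lemma length_encL (f : S.Q → List Bool) (k : ℕ) (hlen : ∀ a, (f a).length = k) :
    ∀ l, (S.encL f l).length = l.length * (k + k + 2)
  | [] => by simp [encL]
  | i :: r => by
      rw [encL, List.length_append, S.length_encT f k hlen, length_encL f k hlen r]
      simp
      ring

lemma encT_inj (f : S.Q → List Bool) (k : ℕ) (hlen : ∀ a, (f a).length = k)
    (hf : Function.Injective f) {i j : S.Q × S.Q × Bool × Bool}
    (h : S.encT f i = S.encT f j) : i = j := by
  obtain ⟨a1, b1, c1, d1⟩ := i
  obtain ⟨a2, b2, c2, d2⟩ := j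
  unfold encT at h
  simp only at h
  have h1 := (List.append_inj h (by simp [hlen])).1
  have h2 := (List.append_inj h (by simp [hlen])).2
  have h3 := (List.append_inj h1 (by simp [hlen])).1
  have h4 := (List.append_inj h1 (by simp [hlen])).2
  simp only [List.cons.injEq] at h2
  simp [hf h3, hf h4, h2.1, h2.2.1]

lemma encL_inj (f : S.Q → List Bool) (k : ℕ) (hlen : ∀ a, (f a).length = k)
    (hf : Function.Injective f) :
    ∀ {l1 l2 : List (S.Q × S.Q × Bool × Bool)}, S.encL f l1 = S.encL f l2 → l1 = l2
  | [], [], _ => rfl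
  | [], i :: r, h => by
      have h' := congrArg List.length h
      rw [S.length_encL f k hlen, S.length_encL f k hlen] at h'
      simp [Nat.mul_eq_zero, eq_comm] at h'
  | i :: r, [], h => by
      have h' := congrArg List.length h
      rw [S.length_encL f k hlen, S.length_encL f k hlen] at h'
      simp [Nat.mul_eq_zero] at h'
  | i :: r, j :: r', h => by
      rw [encL, encL] at h
      have h1 := List.append_inj h
        (by rw [S.length_encT f k hlen, S.length_encT f k hlen])
      have h2 := S.encT_inj f k hlen hf h1.1
      have h3 := encL_inj f k hlen hf h1.2
      rw [h2, h3]

end SCA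

/-- If `L ∈ SCA[t]` (with computable `t`) then for any split `m` the `m`-one-way
communication complexity of `L` is `O(t(N))`: player `B` (holding the suffix)
sends `O(t(N))` bits to player `A` (holding the prefix), who then decides
membership in `L`. -/
theorem sca_to_one_way_cc {α : Type} (L : Set (List α)) (t : ℕ → ℕ) (m : ℕ → ℕ)
    (hm : ∀ N, 0 < N → 0 < m N ∧ m N ≤ N)
    (ht : Computable t)
    (hL : InSCA L t) :
    ∃ C : ℕ, ∃ (B : ℕ → List α → List Bool) (A : ℕ → List α → List Bool → Bool),
      ∀ N : ℕ, ∀ w : List α, w.length = N →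
        (B N (w.drop (m N))).length ≤ C * t N + C ∧
        ((A N (w.take (m N)) (B N (w.drop (m N))) = true) ↔ w ∈ L) := by
  classical
  obtain ⟨S, C0, hlang, hbound⟩ := hL
  haveI := S.fintypeQ
  haveI := S.decEq
  set n := Fintype.card S.Q with hn
  set f : S.Q → List Bool :=
    fun a => (List.range n).map fun i => decide (((Fintype.equivFin S.Q) a : ℕ) = i) with hf
  have hflen : ∀ a, (f a).length = n := by intro a; simp [hf]
  have hfinj : Function.Injective f := by
    intro a b h
    have hb : ((Fintype.equivFin S.Q) a : ℕ) < n := ((Fintype.equivFin S.Q) a).2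
    have h2 := List.getElem_of_eq h (show ((Fintype.equivFin S.Q) a : ℕ) < (f a).length by
      rw [hflen]; exact hb)
    simp only [hf, List.getElem_map, List.getElem_range, decide_eq_decide] at h2
    have h3 := h2.mp trivial
    exact ((Fintype.equivFin S.Q).injective (Fin.ext h3)).symm
  refine ⟨(C0 + 1) * (n + n + 2),
    fun N v => S.encL f (S.infos v (C0 * t N + C0 + 1)),
    fun N u msg => S.decG (u.map S.embed)
      (if h : ∃ l, S.encL f l = msg then h.choose else []), ?_⟩
  intro N w hw
  constructor
  · -- length bound
    rw [S.length_encL f n hflen]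
    have hli : (S.infos (w.drop (m N)) (C0 * t N + C0 + 1)).length = C0 * t N + C0 + 1 := by
      simp [SCA.infos]
    rw [hli]
    calc (C0 * t N + C0 + 1) * (n + n + 2)
        ≤ ((C0 + 1) * t N + (C0 + 1)) * (n + n + 2) := by
          apply Nat.mul_le_mul_right
          have e : (C0 + 1) * t N = C0 * t N + t N := by ring
          omega
      _ = (C0 + 1) * (n + n + 2) * t N + (C0 + 1) * (n + n + 2) := by ring
  · -- correctness
    have hex : ∃ l, S.encL f l = S.encL f (S.infos (w.drop (m N)) (C0 * t N + C0 + 1)) :=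
      ⟨_, rfl⟩
    show S.decG (List.map S.embed (w.take (m N)))
        (if h : ∃ l, S.encL f l = S.encL f (S.infos (w.drop (m N)) (C0 * t N + C0 + 1))
         then h.choose else []) = true ↔ w ∈ L
    rw [dif_pos hex, S.encL_inj f n hflen hfinj hex.choose_spec, S.decG_infos]
    have huv : w.take (m N) ++ w.drop (m N) = w := List.take_append_drop _ _
    rw [huv]
    constructor
    · rintro ⟨s, _, hs⟩
      rw [← hlang]
      exact ⟨s, hs⟩
    · intro hw'
      obtain ⟨s, hsle, hacc⟩ := hbound w hw'
      rw [hw] at hsle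
      exact ⟨s, hsle, hacc⟩
end

section
/- Let L₁ = { w ∈ {0,1}⁺ : |w| = 2ⁿ for some n and w(i) = 1, where i is the integer with binary representation w(0)w(1)⋯w(n−1) }. Then the one-way communication complexity of the block version Block_n(L₁), with the split placed after the first n blocks (i.e., m(N) = n(n+1)), is at least 2ⁿ − n. -/
/-!
Take words whose first `n` letters spell `n + i` in binary, followed by an arbitrary suffix
`t` of length `2ⁿ - n`: such a word lies in `L1` iff `t(i) = 1`. In the block encoding the
first `n` blocks carry only `i`, the remaining ones only `t`, so Alice, seeing `i` and Bob's
message, must be able to recover every bit of `t`. Hence Bob's message is injective on the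
`2^(2ⁿ - n)` suffixes, while fewer than `2^(2ⁿ - n)` binary strings are shorter than `2ⁿ - n`.
-/

/-- The number given (MSB first) by the first `n` bits of `z`. -/
def idxOf (z : List Bool) (n : ℕ) : ℕ :=
  (z.take n).foldl (fun a b => 2 * a + cond b 1 0) 0

/-- The indexing language: `|w| = 2^n` and `w(i) = 1` where `i` is the number
given by the first `n` bits of `w`. -/
def L1 : Set (List Bool) :=
  {w | ∃ n : ℕ, w.length = 2 ^ n ∧ w.getD (idxOf w n) false = true}

/-- The block encoding of `z` with block length `n`: block `i` carries
`bin_n(i)` on the upper track and `z(i)` (padded with zeros) on the lower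
track; blocks are separated by the delimiter `none`. -/
def blockEnc (n : ℕ) (z : List Bool) : List (Option (Bool × Bool)) :=
  List.intercalate [none] ((List.range z.length).map fun i =>
    List.ofFn fun j : Fin n =>
      some (i.testBit (n - 1 - (j : ℕ)), if (j : ℕ) = 0 then z.getD i false else false))

/-- The block version of `L1` for instance parameter `n`. -/
def BlockL1 (n : ℕ) : Set (List (Option (Bool × Bool))) :=
  {w | ∃ z : List Bool, z.length = 2 ^ n ∧ z ∈ L1 ∧ w = blockEnc n z}


namespace List

variable {α : Type*}

theorem intercalate_append_of_ne_nil (sep : List α) {L M : List (List α)} (hL : L ≠ [])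
    (hM : M ≠ []) : sep.intercalate (L ++ M) = sep.intercalate L ++ sep ++ sep.intercalate M := by
  induction L with
  | nil => contradiction
  | cons l L ih =>
    rcases eq_or_ne L [] with rfl | hL'
    · simp [intercalate_cons_of_ne_nil hM]
    · rw [cons_append, intercalate_cons_of_ne_nil (by simp [hL']), ih hL',
        intercalate_cons_of_ne_nil hL']
      simp

theorem length_intercalate_add_length (sep : List α) {L : List (List α)} {n : ℕ}
    (hL : L ≠ []) (hn : ∀ l ∈ L, l.length = n) :
    (sep.intercalate L).length + sep.length = L.length * (n + sep.length) := by
  induction L with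
  | nil => contradiction
  | cons l L ih =>
    rcases eq_or_ne L [] with rfl | hL'
    · simp [hn l (by simp)]
    · rw [intercalate_cons_of_ne_nil hL']
      have := ih hL' fun l' hl' => hn l' (mem_cons_of_mem l hl')
      simp only [length_append, length_cons, hn l mem_cons_self]
      linarith

end List

section BlockEncoding

def blockAt (n i : ℕ) (b : Bool) : List (Option (Bool × Bool)) :=
  List.ofFn fun j : Fin n =>
    some (i.testBit (n - 1 - (j : ℕ)), if (j : ℕ) = 0 then b else false)

def blocksFrom (n k : ℕ) (z : List Bool) : List (List (Option (Bool × Bool))) :=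
  (List.range z.length).map fun i => blockAt n (k + i) (z.getD i false)

variable {n : ℕ}

theorem length_blockAt (i : ℕ) (b : Bool) : (blockAt n i b).length = n := by
  simp [blockAt]

theorem none_notMem_blockAt (i : ℕ) (b : Bool) : none ∉ blockAt n i b := by
  simp [blockAt]

theorem blockAt_injective (hn : 0 < n) (i : ℕ) : Function.Injective (blockAt n i) := by
  intro b b' h
  have := congrArg (·[0]?) h
  simpa [blockAt, hn] using this

theorem blocksFrom_append (k : ℕ) (p t : List Bool) :
    blocksFrom n k (p ++ t) = blocksFrom n k p ++ blocksFrom n (k + p.length) t := by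
  simp only [blocksFrom, List.length_append, List.range_add, List.map_append, List.map_map]
  congr 1
  · refine List.map_congr_left fun i hi => ?_
    rw [List.getD_append _ _ _ _ (List.mem_range.mp hi)]
  · refine List.map_congr_left fun i _ => ?_
    simp [List.getElem?_append_right, Nat.add_assoc]

theorem blocksFrom_ne_nil {z : List Bool} (hz : z ≠ []) (k : ℕ) : blocksFrom n k z ≠ [] := by
  simpa [blocksFrom] using hz

theorem blockEnc_eq_intercalate (z : List Bool) :
    blockEnc n z = [none].intercalate (blocksFrom n 0 z) := by
  simp [blockEnc, blocksFrom, blockAt]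

theorem length_blockEnc_add_one {z : List Bool} (hz : z ≠ []) :
    (blockEnc n z).length + 1 = z.length * (n + 1) := by
  rw [blockEnc_eq_intercalate]
  simpa [blocksFrom] using List.length_intercalate_add_length [none] (blocksFrom_ne_nil hz 0)
    (by simp [blocksFrom, length_blockAt])

theorem blockEnc_append {p t : List Bool} (hp : p ≠ []) (ht : t ≠ []) :
    blockEnc n (p ++ t) =
      blockEnc n p ++ [none] ++ [none].intercalate (blocksFrom n p.length t) := by
  rw [blockEnc_eq_intercalate, blocksFrom_append, List.intercalate_append_of_ne_nil _
    (blocksFrom_ne_nil hp 0) (blocksFrom_ne_nil ht _), ← blockEnc_eq_intercalate, Nat.zero_add]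

theorem take_blockEnc_append {p t : List Bool} (hp : p ≠ []) (ht : t ≠ []) :
    (blockEnc n (p ++ t)).take (p.length * (n + 1)) = blockEnc n p ++ [none] := by
  rw [blockEnc_append hp ht, List.take_left' (by simp [length_blockEnc_add_one hp])]

theorem drop_blockEnc_append {p t : List Bool} (hp : p ≠ []) (ht : t ≠ []) :
    (blockEnc n (p ++ t)).drop (p.length * (n + 1)) =
      [none].intercalate (blocksFrom n p.length t) := by
  rw [blockEnc_append hp ht, List.drop_left' (by simp [length_blockEnc_add_one hp])]

theorem blockEnc_injective (hn : 0 < n) {z z' : List Bool} (hlen : z.length = z'.length)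
    (h : blockEnc n z = blockEnc n z') : z = z' := by
  rcases eq_or_ne z [] with rfl | hz
  · exact (List.length_eq_zero_iff.mp hlen.symm).symm
  have hz' : z' ≠ [] := by simpa [← List.length_pos_iff, ← hlen] using hz
  have hblocks : blocksFrom n 0 z = blocksFrom n 0 z' := by
    rw [blockEnc_eq_intercalate, blockEnc_eq_intercalate] at h
    have hfree (z : List Bool) : ∀ l ∈ blocksFrom n 0 z, none ∉ l := by
      simp [blocksFrom, none_notMem_blockAt]
    have := congrArg (List.splitOn none) h
    rwa [List.splitOn_intercalate _ (hfree z) (blocksFrom_ne_nil hz 0),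
      List.splitOn_intercalate _ (hfree z') (blocksFrom_ne_nil hz' 0)] at this
  refine List.ext_getElem hlen fun i hi hi' => ?_
  have := congrArg (·[i]?) hblocks
  simpa [blocksFrom, hi, hi', (blockAt_injective hn _).eq_iff] using this

theorem blockEnc_mem_blockL1_iff (hn : 0 < n) {z : List Bool} (hz : z.length = 2 ^ n) :
    blockEnc n z ∈ BlockL1 n ↔ z ∈ L1 := by
  refine ⟨fun ⟨z', hz', hL1, h⟩ => ?_, fun h => ⟨z, hz, h, rfl⟩⟩
  rwa [blockEnc_injective hn (hz.trans hz'.symm) h]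

end BlockEncoding

section Indexing

def bitsBE (n m : ℕ) : List Bool := List.ofFn fun j : Fin n => m.testBit (n - 1 - (j : ℕ))

@[simp]
theorem length_bitsBE (n m : ℕ) : (bitsBE n m).length = n := by
  simp [bitsBE]

theorem foldl_bitsBE (n m a : ℕ) :
    (bitsBE n m).foldl (fun a b => 2 * a + cond b 1 0) a = a * 2 ^ n + m % 2 ^ n := by
  induction n generalizing a with
  | zero => simp [bitsBE, Nat.mod_one]
  | succ n ih =>
    have hbits : bitsBE (n + 1) m = m.testBit n :: bitsBE n m := by
      simp only [bitsBE, List.ofFn_succ, Fin.val_zero, Fin.val_succ]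
      congr 2 with j
      congr 1
      omega
    have hbit : (cond (m.testBit n) 1 0 : ℕ) = m / 2 ^ n % 2 := Nat.toNat_testBit m n
    rw [hbits, List.foldl_cons, ih, hbit, Nat.mod_pow_succ]
    ring

theorem idxOf_bitsBE_append {n m : ℕ} (hm : m < 2 ^ n) (t : List Bool) :
    idxOf (bitsBE n m ++ t) n = m := by
  rw [idxOf, List.take_left' (length_bitsBE n m), foldl_bitsBE, Nat.mod_eq_of_lt hm]
  simp

theorem mem_L1_iff_of_length_eq {n : ℕ} {z : List Bool} (hz : z.length = 2 ^ n) :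
    z ∈ L1 ↔ z.getD (idxOf z n) false = true := by
  refine ⟨fun ⟨k, hk, h⟩ => ?_, fun h => ⟨n, hz, h⟩⟩
  rwa [Nat.pow_right_injective le_rfl (hk.symm.trans hz)] at h

theorem bitsBE_append_mem_L1_iff {n i : ℕ} {t : List Bool} (ht : t.length = 2 ^ n - n)
    (hi : i < t.length) : bitsBE n (n + i) ++ t ∈ L1 ↔ t.getD i false = true := by
  rw [mem_L1_iff_of_length_eq (n := n) (by simp; omega), idxOf_bitsBE_append (by omega),
    List.getD_append_right _ _ _ _ (by simp), length_bitsBE, Nat.add_sub_cancel_left]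

end Indexing

theorem card_lt_two_pow_of_injective {α : Type*} [Fintype α] {f : α → List Bool}
    (hf : Function.Injective f) {K : ℕ} (hK : ∀ a, (f a).length < K) :
    Fintype.card α < 2 ^ K := by
  -- the final digit `1` makes the code injective and nonzero
  let digits (l : List Bool) : List ℕ := l.map Bool.toNat ++ [1]
  have hdigit (l : List Bool) : ∀ x ∈ digits l, x < 2 := by
    simp only [digits, List.mem_append, List.mem_map, List.mem_singleton]
    rintro _ (⟨b, -, rfl⟩ | rfl)
    exacts [Bool.toNat_lt b, one_lt_two]
  have hdigits (l : List Bool) : Nat.digits 2 (Nat.ofDigits 2 (digits l)) = digits l :=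
    Nat.digits_ofDigits 2 one_lt_two _ (hdigit l) (by simp [digits])
  have hcode (a : α) : Nat.ofDigits 2 (digits (f a)) ∈ Finset.Ioo 0 (2 ^ K) := by
    refine Finset.mem_Ioo.mpr ⟨Nat.pos_of_ne_zero fun h => ?_, ?_⟩
    · simpa [h, digits] using hdigits (f a)
    · calc Nat.ofDigits 2 (digits (f a)) < 2 ^ (f a).length.succ := by
            simpa [digits] using Nat.ofDigits_lt_base_pow_length one_lt_two (hdigit (f a))
        _ ≤ 2 ^ K := Nat.pow_le_pow_right two_pos (hK a)
  have hinj : Function.Injective fun a => Nat.ofDigits 2 (digits (f a)) := fun a b h => by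
    have := congrArg (Nat.digits 2) h
    simp only [hdigits, digits, List.append_cancel_right_eq] at this
    refine hf (List.map_injective_iff.mpr (fun x y hxy => ?_) this)
    cases x <;> cases y <;> simp_all
  have := Finset.card_le_card_of_injOn (s := Finset.univ) _ (fun a _ => hcode a) hinj.injOn
  simp only [Finset.card_univ, Nat.card_Ioo] at this
  have := Nat.one_le_two_pow (n := K)
  omega

section HardInputs

variable {n : ℕ} {t : List Bool}

theorem bitsBE_ne_nil (hn : 0 < n) (m : ℕ) : bitsBE n m ≠ [] :=
  List.ne_nil_of_length_pos (by simpa using hn)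

theorem length_blockEnc_bitsBE_append (hn : 0 < n) (ht : t.length = 2 ^ n - n) (i : ℕ) :
    (blockEnc n (bitsBE n (n + i) ++ t)).length = (n + 1) * 2 ^ n - 1 := by
  have hlen := length_blockEnc_add_one (n := n)
    (List.append_ne_nil_of_left_ne_nil (bitsBE_ne_nil hn (n + i)) t)
  have hn2 : n < 2 ^ n := Nat.lt_two_pow_self
  rw [List.length_append, length_bitsBE, ht, Nat.add_sub_cancel' hn2.le, mul_comm] at hlen
  omega

theorem blockEnc_bitsBE_append_mem_blockL1_iff (hn : 0 < n) (ht : t.length = 2 ^ n - n) {i : ℕ}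
    (hi : i < t.length) :
    blockEnc n (bitsBE n (n + i) ++ t) ∈ BlockL1 n ↔ t.getD i false = true := by
  rw [blockEnc_mem_blockL1_iff hn (by simp [ht]; omega), bitsBE_append_mem_L1_iff ht hi]

end HardInputs

/-- One-way communication lower bound for `Block_n(L1)` with the split after
the first `n` blocks: any correct one-way protocol must, on some input of the
appropriate length, use a message of at least `2^n − n` bits. -/
theorem blockL1_cc_lower_bound (n : ℕ) (hn : 1 ≤ n)
    (A : List (Option (Bool × Bool)) → List Bool → Bool)
    (B : List (Option (Bool × Bool)) → List Bool)
    (hcorrect : ∀ w : List (Option (Bool × Bool)),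
      w.length = (n + 1) * 2 ^ n - 1 →
      ((A (w.take (n * (n + 1))) (B (w.drop (n * (n + 1)))) = true) ↔
        w ∈ BlockL1 n)) :
    ∃ w : List (Option (Bool × Bool)), w.length = (n + 1) * 2 ^ n - 1 ∧
      2 ^ n - n ≤ (B (w.drop (n * (n + 1)))).length := by
  by_contra! hshort
  set K := 2 ^ n - n
  have ht (t : Fin K → Bool) : List.ofFn t ≠ [] :=
    List.ne_nil_of_length_pos (by simpa [K] using Nat.lt_two_pow_self)
  let input (i : ℕ) (t : Fin K → Bool) := blockEnc n (bitsBE n (n + i) ++ List.ofFn t)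
  have hlen (i : ℕ) (t : Fin K → Bool) : (input i t).length = (n + 1) * 2 ^ n - 1 :=
    length_blockEnc_bitsBE_append hn List.length_ofFn i
  have htake (i : ℕ) (t : Fin K → Bool) :
      (input i t).take (n * (n + 1)) = blockEnc n (bitsBE n (n + i)) ++ [none] := by
    simpa using take_blockEnc_append (bitsBE_ne_nil hn (n + i)) (ht t)
  let msg (t : Fin K → Bool) := B ([none].intercalate (blocksFrom n n (List.ofFn t)))
  have hdrop (i : ℕ) (t : Fin K → Bool) : B ((input i t).drop (n * (n + 1))) = msg t := by
    simpa using congrArg B (drop_blockEnc_append (bitsBE_ne_nil hn (n + i)) (ht t))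
  have hdecide (i : Fin K) (t : Fin K → Bool) :
      A (blockEnc n (bitsBE n (n + i)) ++ [none]) (msg t) = t i := by
    have := hcorrect _ (hlen i t)
    have hi : (i : ℕ) < (List.ofFn t).length := (List.length_ofFn).symm ▸ i.2
    rwa [htake, hdrop, blockEnc_bitsBE_append_mem_blockL1_iff hn List.length_ofFn hi,
      List.getD_eq_getElem _ _ hi, List.getElem_ofFn, Bool.coe_iff_coe] at this
  have hinj : Function.Injective msg := fun t₁ t₂ h => funext fun i => by
    rw [← hdecide i t₁, h, hdecide]
  have := card_lt_two_pow_of_injective hinj fun t => hdrop 0 t ▸ hshort _ (hlen 0 t)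
  simp at this
end

section
/- In a shrinking cellular automaton, for any configuration arising from a finite input, the cell with index zero after a shrinking transition is the leftmost cell that was active and not deleted in that transition; in particular, in every time step cell zero is the leftmost active cell unless all cells are inactive. -/
/-- After one shrinking transition of an SCA (local rule `δ`, inactive state
`q`, delete state `del`) applied to a configuration `c : ℤ → Q` arising from a
finite input (inactive to the left of cell 0, finitely many active cells), the
cell with index zero of the contracted configuration `Φd` is the leftmost
nonnegative cell that was not deleted in the transition; in particular all
cells to the left of cell zero are inactive, so cell zero is the leftmost
active cell unless all cells are inactive. -/
theorem sca_cell_zero_leftmost {Q : Type} (δ : Q → Q → Q → Q) (q del : Q)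
    (hne : del ≠ q) (hinact : ∀ a b, δ a q b = q)
    (c : ℤ → Q) (hneg : ∀ i : ℤ, i < 0 → c i = q)
    (hfin : {i : ℤ | c i ≠ q}.Finite) :
    let d : ℤ → Q := fun i => δ (c (i - 1)) (c i) (c (i + 1))
    let p : ℕ → Prop := fun k => d (k : ℤ) ≠ del
    let Φd : ℤ → Q := fun j =>
      if 0 ≤ j then d ((Nat.nth p j.toNat : ℕ) : ℤ) else d j
    Φd 0 = d ((Nat.nth p 0 : ℕ) : ℤ) ∧
    Nat.nth p 0 = sInf {k : ℕ | p k} ∧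
    (∀ k : ℕ, k < Nat.nth p 0 → d (k : ℤ) = del) ∧
    p (Nat.nth p 0) ∧
    (∀ i : ℤ, i < 0 → Φd i = q) := by
  intro d p Φd
  have hinf : {k : ℕ | p k}.Infinite := by
    have hsub : {k : ℕ | ¬ p k} ⊆ ((↑) : ℕ → ℤ) ⁻¹' {i : ℤ | c i ≠ q} := by
      intro k hk
      simp only [Set.mem_setOf_eq, not_not, p] at hk
      simp only [Set.mem_preimage, Set.mem_setOf_eq]
      intro hc
      have hq : d (k:ℤ) = q := by simp only [d]; rw [hc]; exact hinact _ _
      exact hne (hk.symm.trans hq)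
    have hfin' : {k : ℕ | ¬ p k}.Finite :=
      Set.Finite.subset (hfin.preimage (Set.injOn_of_injective Nat.cast_injective)) hsub
    have : {k : ℕ | p k} = {k : ℕ | ¬ p k}ᶜ := by ext k; simp
    rw [this]
    exact hfin'.infinite_compl
  refine ⟨?_, Nat.nth_zero, ?_, ?_, ?_⟩
  · simp [Φd]
  · intro k hk
    rw [Nat.nth_zero] at hk
    have := Nat.notMem_of_lt_sInf hk
    simpa [p, not_not] using this
  · exact Nat.nth_mem_of_infinite hinf 0
  · intro i hi
    have h1 : ¬ (0 : ℤ) ≤ i := not_le.mpr hi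
    simp only [Φd, if_neg h1, d]
    rw [hneg i hi, hinact]
end
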